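/- (Remark: explicit asymptotic variance and covariance under stationary moments) Suppose in addition to Assumption (A) that the innovation moments are stationary up to order four, i.e. γ_k = γ and σ_k² = σ² for all k. Then for weighting vectors v_n, w_n, ṽ_n, w̃_n with uniformly bounded ℓ1-norms the series α_n²(v_n,w_n) = (γ − σ⁴) ( f̃_{0,0}^{(n)}(v_n,w_n) )² + σ⁴ Σ_{l=1}^∞ ( f̃_{l,0}^{(n)}(v_n,w_n) )² and β_n(v_n,w_n,ṽ_n,w̃_n) = (γ − σ⁴) f̃_{0,0}^{(n)}(v_n,w_n) f̃_{0,0}^{(n)}(ṽ_n,w̃_n) + σ⁴ Σ_{l=1}^∞ f̃_{l,0}^{(n)}(v_n,w_n) f̃_{l,0}^{(n)}(ṽ_n,w̃_n) converge, are bounded uniformly in n, and these choices satisfy the defining approximation bounds (Ass4) and (Ass5) of the technical lemma, i.e. | ( f̃_{0,0}^{(n)} )² n'(γ − σ⁴) + σ⁴ Σ_{j=1}^{n'} Σ_{l=1}^{j−1} ( f̃_{j−l,0}^{(n)} )² − n' α_n² | ≤ C (n')^{1−θ} for all n' (and the analogous bound for β_n), with C depending on the weighting vectors only through their ℓ1-norms.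 -/

import Mathlib

/-!
By (A), `|c_{nj}^{(ν)}| ≲ (j ∨ 1)^(-r)` with `r = 3/4 + θ/2`, so for weights of bounded
`ℓ¹`-norm `|f_{l,j}| ≲ (j ∨ 1)^(-r) (j + l)^(-r)`; summing over `j` (split at `j = l`) gives
`|f̃_{l,0}| ≲ (l ∨ 1)^(-1/2-θ)` uniformly in `n`. Products of two such sequences are
`O(l^(-1-2θ))`, which makes the series summable and `α_n²`, `β_n` bounded. In (Ass4) and (Ass5)
the `(γ - σ⁴)` terms cancel exactly and what is left is `-σ⁴` times `∑_{j ≤ n'}` of the tails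
`∑_{l ≥ j}`, each `O(j^(-2θ))`; summing them gives `O(n'^(1-2θ)) ⊆ O(n'^(1-θ))`.
-/

open MeasureTheory ProbabilityTheory Filter Finset

noncomputable section

/-- The bilinear coefficient functionals `f_{l,j}^{(n)}(v,w)`. -/
def fCoef (d : ℕ → ℕ) (c : ℕ → ℕ → ℕ → ℝ) (n : ℕ) (v w : ℕ → ℝ) (l j : ℕ) : ℝ :=
  if l = 0 then
    ∑ ν ∈ Finset.range (d n), ∑ μ ∈ Finset.range (d n), v ν * w μ * (c n ν j * c n μ j)
  else
    ∑ ν ∈ Finset.range (d n), ∑ μ ∈ Finset.range (d n),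
      v ν * w μ * (c n ν j * c n μ (j + l) + c n μ j * c n ν (j + l))

/-- `f̃_{l,i}^{(n)}(v,w) = Σ_{j=i}^∞ f_{l,j}^{(n)}(v,w)`. -/
def ftil (d : ℕ → ℕ) (c : ℕ → ℕ → ℕ → ℝ) (n : ℕ) (v w : ℕ → ℝ) (l i : ℕ) : ℝ :=
  ∑' j : ℕ, fCoef d c n v w l (i + j)

/-- Assumption (A): `sup_n max_{1≤ν≤d_n} |c_{nj}^{(ν)}|² ≤ C₀ (j ∨ 1)^{−3/2−θ}`. -/
def AssumptionA (d : ℕ → ℕ) (c : ℕ → ℕ → ℕ → ℝ) (θ : ℝ) : Prop :=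
  ∃ C₀ > (0 : ℝ), ∀ n j : ℕ, ∀ ν < d n,
    (c n ν j) ^ 2 ≤ C₀ * ((max j 1 : ℕ) : ℝ) ^ (-(3 / 2 : ℝ) - θ)

namespace Real

lemma mul_sub_mul_rpow_sub_one_le_rpow_sub_rpow {p a b : ℝ} (hp0 : 0 ≤ p) (hp1 : p ≤ 1)
    (ha : 0 ≤ a) (hab : a ≤ b) :
    p * (b - a) * b ^ (p - 1) ≤ b ^ p - a ^ p := by
  rcases hab.eq_or_lt with rfl | hab
  · simp
  have hb : 0 < b := ha.trans_lt hab
  have hbern := rpow_one_add_le_one_add_mul_self (s := a / b - 1)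
    (by linarith [div_nonneg ha hb.le]) hp0 hp1
  rw [add_sub_cancel, div_rpow ha hb.le, div_le_iff₀ (rpow_pos_of_pos hb p)] at hbern
  have hbp : b ^ p = b ^ (p - 1) * b := by
    rw [← rpow_add_one hb.ne', sub_add_cancel]
  have : (1 + p * (a / b - 1)) * b ^ p = b ^ p - p * (b - a) * b ^ (p - 1) := by
    rw [hbp]; field_simp; ring
  linarith

lemma sum_Icc_natCast_rpow_neg_le {p : ℝ} (hp0 : 0 ≤ p) (hp1 : p < 1) (N : ℕ) :
    ∑ j ∈ Icc 1 N, (j : ℝ) ^ (-p) ≤ (N : ℝ) ^ (1 - p) / (1 - p) := by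
  have h1p : 0 < 1 - p := by linarith
  induction N with
  | zero => simp [zero_rpow h1p.ne']
  | succ N ih =>
    rw [sum_Icc_succ_top (by omega), le_div_iff₀ h1p, add_mul]
    rw [le_div_iff₀ h1p] at ih
    have step := mul_sub_mul_rpow_sub_one_le_rpow_sub_rpow (p := 1 - p) (a := N) (b := N + 1)
      (by linarith) (by linarith) (by positivity) (by linarith)
    push_cast
    rw [add_sub_cancel_left, sub_sub_cancel_left] at step
    linarith

lemma tsum_natCast_add_rpow_neg_le {q : ℝ} (hq : 1 < q) {N : ℕ} (hN : 1 ≤ N) :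
    ∑' m : ℕ, ((m + N : ℕ) : ℝ) ^ (-q) ≤ q / (q - 1) * (N : ℝ) ^ (1 - q) := by
  have hN0 : (0 : ℝ) < N := by exact_mod_cast hN
  have hsum : Summable (fun m : ℕ => ((m + N : ℕ) : ℝ) ^ (-q)) :=
    (summable_nat_add_iff N).2 (summable_nat_rpow.2 (by linarith))
  have htail : ∑' m : ℕ, ((m + N + 1 : ℕ) : ℝ) ^ (-q) ≤ (N : ℝ) ^ (1 - q) / (q - 1) := by
    refine ((antitoneOn_rpow_Ioi_of_exponent_nonpos (by linarith)).mono
      (Set.Ici_subset_Ioi.2 hN0)).tsum_comp_add_le_integral N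
      (integrableOn_Ioi_rpow_of_lt (by linarith) hN0)
      (fun t ht => rpow_nonneg (hN0.le.trans (le_of_lt ht)) _) |>.trans_eq ?_
    rw [integral_Ioi_rpow_of_lt (by linarith) hN0, show -q + 1 = 1 - q by ring, neg_div,
      ← div_neg, neg_sub]
  have hhead : (N : ℝ) ^ (-q) ≤ (N : ℝ) ^ (1 - q) :=
    rpow_le_rpow_of_exponent_le (by exact_mod_cast hN) (by linarith)
  rw [hsum.tsum_eq_zero_add]
  have : q / (q - 1) * (N : ℝ) ^ (1 - q) = (N : ℝ) ^ (1 - q) + (N : ℝ) ^ (1 - q) / (q - 1) := by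
    field_simp [show q - 1 ≠ 0 by linarith]; ring
  simp only [zero_add, this]
  exact add_le_add hhead (by simpa only [add_right_comm] using htail)

end Real

open Real

def powDecay (r : ℝ) (j : ℕ) : ℝ := ((max j 1 : ℕ) : ℝ) ^ (-r)

lemma powDecay_nonneg (r : ℝ) (j : ℕ) : 0 ≤ powDecay r j := rpow_nonneg (Nat.cast_nonneg _) _

lemma powDecay_zero (r : ℝ) : powDecay r 0 = 1 := by simp [powDecay]

lemma powDecay_of_one_le (r : ℝ) {j : ℕ} (hj : 1 ≤ j) : powDecay r j = (j : ℝ) ^ (-r) := by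
  rw [powDecay, max_eq_left hj]

lemma powDecay_mul_powDecay (r s : ℝ) (j : ℕ) :
    powDecay r j * powDecay s j = powDecay (r + s) j := by
  rw [powDecay, powDecay, powDecay, ← rpow_add (by positivity), neg_add]

lemma antitone_powDecay {r : ℝ} (hr : 0 ≤ r) : Antitone (powDecay r) := fun i j hij =>
  rpow_le_rpow_of_nonpos (by positivity) (by gcongr) (by linarith)

lemma summable_powDecay {r : ℝ} (hr : 1 < r) : Summable (powDecay r) := by
  rw [← summable_nat_add_iff 1]
  refine ((summable_nat_add_iff 1).2 (summable_nat_rpow.2 (by linarith : -r < -1))).congr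
    fun j => ?_
  rw [powDecay_of_one_le r (by omega)]

lemma sum_range_powDecay_le {r : ℝ} (hr0 : 0 ≤ r) (hr1 : r < 1) {l : ℕ} (hl : 1 ≤ l) :
    ∑ j ∈ range l, powDecay r j ≤ (1 + 1 / (1 - r)) * (l : ℝ) ^ (1 - r) := by
  have hsplit : ∑ j ∈ range l, powDecay r j = 1 + ∑ j ∈ Ico 1 l, (j : ℝ) ^ (-r) := by
    rw [range_eq_Ico, sum_eq_sum_Ico_succ_bot (by omega), powDecay_zero]
    exact congrArg _ (sum_congr rfl fun j hj => powDecay_of_one_le r (mem_Ico.1 hj).1)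
  have hIco : ∑ j ∈ Ico 1 l, (j : ℝ) ^ (-r) ≤ (l : ℝ) ^ (1 - r) / (1 - r) :=
    (sum_le_sum_of_subset_of_nonneg Ico_subset_Icc_self fun j _ _ => by positivity).trans
      (sum_Icc_natCast_rpow_neg_le hr0 hr1 l)
  have hone : 1 ≤ (l : ℝ) ^ (1 - r) := one_le_rpow (by exact_mod_cast hl) (by linarith)
  rw [hsplit, show (1 + 1 / (1 - r)) * (l : ℝ) ^ (1 - r)
    = (l : ℝ) ^ (1 - r) + (l : ℝ) ^ (1 - r) / (1 - r) by ring]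
  linarith

lemma summable_powDecay_mul_shift {r : ℝ} (hr : 1 / 2 < r) (l : ℕ) :
    Summable fun j => powDecay r j * powDecay r (j + l) := by
  refine (summable_powDecay (r := r + r) (by linarith)).of_nonneg_of_le
    (fun j => mul_nonneg (powDecay_nonneg r j) (powDecay_nonneg r _)) fun j => ?_
  rw [← powDecay_mul_powDecay]
  exact mul_le_mul_of_nonneg_left (antitone_powDecay (by linarith) (by omega))
    (powDecay_nonneg r j)

lemma tsum_powDecay_mul_shift_le_of_one_le {r : ℝ} (hr : 1 / 2 < r) (hr1 : r < 1) {l : ℕ}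
    (hl : 1 ≤ l) :
    ∑' j, powDecay r j * powDecay r (j + l)
      ≤ (1 + 1 / (1 - r) + 2 * r / (2 * r - 1)) * (l : ℝ) ^ (1 - 2 * r) := by
  have hl0 : (0 : ℝ) < l := by exact_mod_cast hl
  have hhead : ∑ j ∈ range l, powDecay r j * powDecay r (j + l)
      ≤ (1 + 1 / (1 - r)) * (l : ℝ) ^ (1 - 2 * r) :=
    calc ∑ j ∈ range l, powDecay r j * powDecay r (j + l)
        ≤ (∑ j ∈ range l, powDecay r j) * powDecay r l := by
          rw [sum_mul]
          exact sum_le_sum fun j _ =>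
            mul_le_mul_of_nonneg_left (antitone_powDecay (by linarith) (by omega))
              (powDecay_nonneg r j)
      _ ≤ (1 + 1 / (1 - r)) * (l : ℝ) ^ (1 - r) * (l : ℝ) ^ (-r) := by
          rw [powDecay_of_one_le r hl]
          exact mul_le_mul_of_nonneg_right (sum_range_powDecay_le (by linarith) hr1 hl)
            (by positivity)
      _ = (1 + 1 / (1 - r)) * (l : ℝ) ^ (1 - 2 * r) := by
          rw [mul_assoc, ← rpow_add hl0]; ring_nf
  have htail : ∑' j, powDecay r (j + l) * powDecay r (j + l + l)
      ≤ 2 * r / (2 * r - 1) * (l : ℝ) ^ (1 - 2 * r) :=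
    calc ∑' j, powDecay r (j + l) * powDecay r (j + l + l)
        ≤ ∑' j : ℕ, ((j + l : ℕ) : ℝ) ^ (-(2 * r)) := by
          refine ((summable_nat_add_iff l).2 (summable_powDecay_mul_shift hr l)).tsum_le_tsum
            (fun j => ?_) ((summable_nat_add_iff l).2 (summable_nat_rpow.2 (by linarith)))
          rw [← powDecay_of_one_le _ (by omega), two_mul, ← powDecay_mul_powDecay]
          exact mul_le_mul_of_nonneg_left (antitone_powDecay (by linarith) (by omega))
            (powDecay_nonneg r _)
      _ ≤ 2 * r / (2 * r - 1) * (l : ℝ) ^ (1 - 2 * r) :=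
          tsum_natCast_add_rpow_neg_le (by linarith) hl
  rw [← (summable_powDecay_mul_shift hr l).sum_add_tsum_nat_add l, add_mul]
  linarith

lemma exists_tsum_powDecay_mul_shift_le {r : ℝ} (hr : 1 / 2 < r) (hr1 : r < 1) :
    ∃ C, ∀ l, ∑' j, powDecay r j * powDecay r (j + l) ≤ C * powDecay (2 * r - 1) l := by
  have hS : 0 ≤ ∑' j, powDecay (r + r) j := tsum_nonneg (powDecay_nonneg _)
  have hC : 0 ≤ 1 + 1 / (1 - r) + 2 * r / (2 * r - 1) := by
    have : 0 < 1 - r := by linarith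
    have : 0 < 2 * r - 1 := by linarith
    positivity
  refine ⟨∑' j, powDecay (r + r) j + (1 + 1 / (1 - r) + 2 * r / (2 * r - 1)), fun l => ?_⟩
  rcases Nat.eq_zero_or_pos l with rfl | hl
  · simp only [add_zero, powDecay_mul_powDecay, powDecay_zero, mul_one]
    linarith
  · rw [powDecay_of_one_le _ hl, neg_sub]
    refine (tsum_powDecay_mul_shift_le_of_one_le hr hr1 hl).trans ?_
    have := rpow_nonneg (Nat.cast_nonneg l) (1 - 2 * r)
    nlinarith

lemma abs_sum_sum_mul_le {ι : Type*} (s : Finset ι) (V W : ι → ℝ) (X : ι → ι → ℝ) {M : ℝ}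
    (hX : ∀ ν ∈ s, ∀ μ ∈ s, |X ν μ| ≤ M) :
    |∑ ν ∈ s, ∑ μ ∈ s, V ν * W μ * X ν μ| ≤ (∑ ν ∈ s, |V ν|) * (∑ μ ∈ s, |W μ|) * M :=
  calc |∑ ν ∈ s, ∑ μ ∈ s, V ν * W μ * X ν μ|
      ≤ ∑ ν ∈ s, ∑ μ ∈ s, |V ν| * |W μ| * M := by
        refine (abs_sum_le_sum_abs _ _).trans (sum_le_sum fun ν hν => ?_)
        refine (abs_sum_le_sum_abs _ _).trans (sum_le_sum fun μ hμ => ?_)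
        rw [abs_mul, abs_mul]
        exact mul_le_mul_of_nonneg_left (hX ν hν μ hμ) (by positivity)
    _ = (∑ ν ∈ s, |V ν|) * (∑ μ ∈ s, |W μ|) * M := by
        rw [sum_mul_sum, sum_mul]
        exact sum_congr rfl fun ν _ => by rw [sum_mul]

section Coefficients

variable {d : ℕ → ℕ} {c : ℕ → ℕ → ℕ → ℝ}

lemma abs_fCoef_le {n : ℕ} {b : ℕ → ℝ} (hc : ∀ j, ∀ ν < d n, |c n ν j| ≤ b j) (V W : ℕ → ℝ)
    (l j : ℕ) :
    |fCoef d c n V W l j|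
      ≤ 2 * (∑ ν ∈ range (d n), |V ν|) * (∑ ν ∈ range (d n), |W ν|) * (b j * b (j + l)) := by
  have hprod : ∀ ν ∈ range (d n), ∀ μ ∈ range (d n), ∀ i k,
      |c n ν i * c n μ k| ≤ b i * b k := fun ν hν μ hμ i k => by
    have hνi := hc i ν (mem_range.1 hν)
    rw [abs_mul]
    exact mul_le_mul hνi (hc k μ (mem_range.1 hμ)) (abs_nonneg _) ((abs_nonneg _).trans hνi)
  refine le_of_le_of_eq (b := (∑ ν ∈ range (d n), |V ν|) * (∑ ν ∈ range (d n), |W ν|) *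
    (2 * (b j * b (j + l)))) ?_ (by ring)
  unfold fCoef
  split_ifs with hl
  · subst hl
    refine abs_sum_sum_mul_le _ V W _ fun ν hν μ hμ => ?_
    rw [add_zero]
    linarith [hprod ν hν μ hμ j j, mul_self_nonneg (b j)]
  · refine abs_sum_sum_mul_le _ V W _ fun ν hν μ hμ => ?_
    rw [two_mul]
    exact (abs_add_le _ _).trans (add_le_add (hprod ν hν μ hμ _ _) (hprod μ hμ ν hν _ _))

lemma abs_ftil_le {n : ℕ} {b : ℕ → ℝ} (hc : ∀ j, ∀ ν < d n, |c n ν j| ≤ b j) (V W : ℕ → ℝ)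
    {l : ℕ} (hs : Summable fun j => b j * b (j + l)) :
    |ftil d c n V W l 0|
      ≤ 2 * (∑ ν ∈ range (d n), |V ν|) * (∑ ν ∈ range (d n), |W ν|) * ∑' j, b j * b (j + l) := by
  simp only [ftil, zero_add]
  exact tsum_of_norm_bounded (hs.hasSum.mul_left _) fun j => by
    rw [Real.norm_eq_abs]; exact abs_fCoef_le hc V W l j

lemma abs_le_sqrt_mul_powDecay {θ : ℝ} {C₀ : ℝ} (hC₀ : 0 < C₀)
    (hc : ∀ n j : ℕ, ∀ ν < d n, (c n ν j) ^ 2 ≤ C₀ * ((max j 1 : ℕ) : ℝ) ^ (-(3 / 2 : ℝ) - θ))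
    (n j : ℕ) : ∀ ν < d n, |c n ν j| ≤ √C₀ * powDecay (3 / 4 + θ / 2) j := by
  intro ν hν
  have hsq : C₀ * ((max j 1 : ℕ) : ℝ) ^ (-(3 / 2 : ℝ) - θ)
      = (√C₀ * powDecay (3 / 4 + θ / 2) j) ^ 2 := by
    rw [mul_pow, sq_sqrt hC₀.le, sq, powDecay_mul_powDecay, powDecay]
    ring_nf
  have := abs_le_sqrt ((hc n j ν hν).trans hsq.le)
  rwa [sqrt_sq (mul_nonneg (sqrt_nonneg _) (powDecay_nonneg _ _))] at this

lemma exists_abs_ftil_le_mul_powDecay {θ : ℝ} (hθ0 : 0 < θ) (hθ : θ < 1 / 2)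
    (hA : AssumptionA d c θ) {V W : ℕ → ℕ → ℝ} {KV KW : ℝ}
    (hV : ∀ n, ∑ ν ∈ range (d n), |V n ν| ≤ KV) (hW : ∀ n, ∑ ν ∈ range (d n), |W n ν| ≤ KW) :
    ∃ E, ∀ n l, |ftil d c n (V n) (W n) l 0| ≤ E * powDecay (1 / 2 + θ) l := by
  obtain ⟨C₀, hC₀, hc⟩ := hA
  obtain ⟨C, hC⟩ := exists_tsum_powDecay_mul_shift_le (r := 3 / 4 + θ / 2) (by linarith)
    (by linarith)
  refine ⟨2 * KV * KW * (C₀ * C), fun n l => ?_⟩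
  have hs := (summable_powDecay_mul_shift (r := 3 / 4 + θ / 2) (by linarith) l).mul_left C₀
  have hsqrt (j : ℕ) : √C₀ * powDecay (3 / 4 + θ / 2) j * (√C₀ * powDecay (3 / 4 + θ / 2) (j + l))
      = C₀ * (powDecay (3 / 4 + θ / 2) j * powDecay (3 / 4 + θ / 2) (j + l)) := by
    rw [mul_mul_mul_comm, mul_self_sqrt hC₀.le]
  have hVn : 0 ≤ ∑ ν ∈ range (d n), |V n ν| := sum_nonneg fun ν _ => abs_nonneg _
  calc |ftil d c n (V n) (W n) l 0|
      ≤ 2 * (∑ ν ∈ range (d n), |V n ν|) * (∑ ν ∈ range (d n), |W n ν|) *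
          ∑' j, C₀ * (powDecay (3 / 4 + θ / 2) j * powDecay (3 / 4 + θ / 2) (j + l)) := by
        simp only [← hsqrt] at hs ⊢
        exact abs_ftil_le (abs_le_sqrt_mul_powDecay hC₀ hc n) _ _ hs
    _ ≤ 2 * KV * KW * (C₀ * (C * powDecay (2 * (3 / 4 + θ / 2) - 1) l)) := by
        have hKV : 0 ≤ KV := hVn.trans (hV n)
        have hKW : 0 ≤ KW := (sum_nonneg fun ν _ => abs_nonneg (W n ν)).trans (hW n)
        have hT : 0 ≤ ∑' j, powDecay (3 / 4 + θ / 2) j * powDecay (3 / 4 + θ / 2) (j + l) :=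
          tsum_nonneg fun j => mul_nonneg (powDecay_nonneg _ _) (powDecay_nonneg _ _)
        rw [tsum_mul_left]
        gcongr
        exacts [hV n, hW n, hC l]
    _ = 2 * KV * KW * (C₀ * C) * powDecay (1 / 2 + θ) l := by ring_nf

end Coefficients

lemma sum_Icc_one_sub_eq_sum_range {M : Type*} [AddCommMonoid M] (f : ℕ → M) (j : ℕ) :
    ∑ l ∈ Icc 1 (j - 1), f (j - l) = ∑ i ∈ range (j - 1), f (i + 1) := by
  refine sum_nbij' (fun l => j - 1 - l) (fun i => j - 1 - i) ?_ ?_ ?_ ?_ ?_ <;>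
    intro a ha <;> simp only [mem_Icc, mem_range] at ha ⊢
  all_goals first | omega | congr 1; omega

section LongRun

variable {u : ℕ → ℝ} {K q : ℝ}

lemma summable_of_abs_le_mul_powDecay (hq : 1 < q) (hu : ∀ l, |u l| ≤ K * powDecay q l) :
    Summable u :=
  ((summable_powDecay hq).mul_left K).of_norm_bounded hu

lemma abs_tsum_add_le_of_abs_le_mul_powDecay (hq : 1 < q) (hu : ∀ l, |u l| ≤ K * powDecay q l)
    {N : ℕ} (hN : 1 ≤ N) :
    |∑' m, u (m + N)| ≤ K * (q / (q - 1)) * (N : ℝ) ^ (1 - q) := by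
  have hK : 0 ≤ K := by simpa [powDecay_zero] using (abs_nonneg (u 0)).trans (hu 0)
  have hsum : Summable fun m : ℕ => ((m + N : ℕ) : ℝ) ^ (-q) :=
    (summable_nat_add_iff N).2 (summable_nat_rpow.2 (by linarith))
  refine (tsum_of_norm_bounded (f := fun m => u (m + N)) (hsum.hasSum.mul_left K)
    fun m => ?_).trans ?_
  · rw [Real.norm_eq_abs, ← powDecay_of_one_le q (by omega)]
    exact hu _
  · rw [mul_assoc]
    exact mul_le_mul_of_nonneg_left (tsum_natCast_add_rpow_neg_le hq hN) hK

lemma abs_sum_Icc_sum_Icc_sub_le (hq1 : 1 < q) (hq2 : q < 2)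
    (hu : ∀ l, |u l| ≤ K * powDecay q l) (N : ℕ) :
    |∑ j ∈ Icc 1 N, ∑ l ∈ Icc 1 (j - 1), u (j - l) - N * ∑' l, u (l + 1)|
      ≤ K * (q / (q - 1) / (2 - q)) * (N : ℝ) ^ (2 - q) := by
  have hK : 0 ≤ K := by simpa [powDecay_zero] using (abs_nonneg (u 0)).trans (hu 0)
  have hs : Summable fun l => u (l + 1) :=
    (summable_nat_add_iff 1).2 (summable_of_abs_le_mul_powDecay hq1 hu)
  have htail : ∀ j ∈ Icc 1 N,
      ∑ l ∈ Icc 1 (j - 1), u (j - l) - ∑' l, u (l + 1) = -∑' m, u (m + j) := by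
    intro j hj
    have hshift : ∀ m, m + (j - 1) + 1 = m + j := by
      have := (mem_Icc.1 hj).1
      omega
    rw [sum_Icc_one_sub_eq_sum_range, ← hs.sum_add_tsum_nat_add (j - 1)]
    simp only [hshift]
    ring
  calc |∑ j ∈ Icc 1 N, ∑ l ∈ Icc 1 (j - 1), u (j - l) - N * ∑' l, u (l + 1)|
      = |∑ j ∈ Icc 1 N, (∑ l ∈ Icc 1 (j - 1), u (j - l) - ∑' l, u (l + 1))| := by
        rw [sum_sub_distrib, sum_const, Nat.card_Icc, nsmul_eq_mul, Nat.add_sub_cancel]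
    _ ≤ ∑ j ∈ Icc 1 N, K * (q / (q - 1)) * (j : ℝ) ^ (-(q - 1)) := by
        refine (abs_sum_le_sum_abs _ _).trans (sum_le_sum fun j hj => ?_)
        rw [htail j hj, abs_neg, show -(q - 1) = 1 - q by ring]
        exact abs_tsum_add_le_of_abs_le_mul_powDecay hq1 hu (mem_Icc.1 hj).1
    _ ≤ K * (q / (q - 1)) * ((N : ℝ) ^ (1 - (q - 1)) / (1 - (q - 1))) := by
        rw [← mul_sum]
        have : 0 ≤ q / (q - 1) := div_nonneg (by linarith) (by linarith)
        gcongr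
        exact sum_Icc_natCast_rpow_neg_le (by linarith) (by linarith) N
    _ = K * (q / (q - 1) / (2 - q)) * (N : ℝ) ^ (2 - q) := by ring_nf

end LongRun

lemma abs_mul_le_mul_powDecay {x y E E' p p' : ℝ} {l : ℕ} (hx : |x| ≤ E * powDecay p l)
    (hy : |y| ≤ E' * powDecay p' l) : |x * y| ≤ E * E' * powDecay (p + p') l := by
  rw [abs_mul, ← powDecay_mul_powDecay, mul_mul_mul_comm]
  exact mul_le_mul hx hy (abs_nonneg _) ((abs_nonneg _).trans hx)

lemma natCast_rpow_le_natCast_rpow {s t : ℝ} (hs : 0 < s) (hst : s ≤ t) (N : ℕ) :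
    (N : ℝ) ^ s ≤ (N : ℝ) ^ t := by
  rcases Nat.eq_zero_or_pos N with rfl | hN
  · simp [zero_rpow hs.ne', zero_rpow (hs.trans_le hst).ne']
  · exact rpow_le_rpow_of_exponent_le (by exact_mod_cast hN) hst

section Covariance

variable {p E E' : ℝ} {φ ψ : ℕ → ℕ → ℝ}

lemma summable_mul_succ_of_abs_le_mul_powDecay (hp : 1 / 2 < p)
    (hφ : ∀ n l, |φ n l| ≤ E * powDecay p l)
    (hψ : ∀ n l, |ψ n l| ≤ E' * powDecay p l) (n : ℕ) :
    Summable fun l => φ n (l + 1) * ψ n (l + 1) :=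
  (summable_nat_add_iff 1).2 <| summable_of_abs_le_mul_powDecay (q := p + p) (by linarith)
    fun l => abs_mul_le_mul_powDecay (hφ n l) (hψ n l)

-- The bounded expression is `β_n`, and `α_n²` when `ψ = φ`.
lemma exists_abs_longRunCov_le (hp : 1 / 2 < p) (σ2 γ : ℝ)
    (hφ : ∀ n l, |φ n l| ≤ E * powDecay p l) (hψ : ∀ n l, |ψ n l| ≤ E' * powDecay p l) :
    ∃ K, ∀ n, |(γ - σ2 ^ 2) * φ n 0 * ψ n 0 + σ2 ^ 2 * ∑' l, φ n (l + 1) * ψ n (l + 1)| ≤ K := by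
  refine ⟨|γ - σ2 ^ 2| * (E * E') + σ2 ^ 2 * (E * E' * ((p + p) / (p + p - 1))), fun n => ?_⟩
  have hu l := abs_mul_le_mul_powDecay (hφ n l) (hψ n l)
  have h0 := hu 0
  have htsum := abs_tsum_add_le_of_abs_le_mul_powDecay (by linarith) hu le_rfl
  rw [powDecay_zero, mul_one] at h0
  rw [Nat.cast_one, one_rpow, mul_one] at htsum
  calc |(γ - σ2 ^ 2) * φ n 0 * ψ n 0 + σ2 ^ 2 * ∑' l, φ n (l + 1) * ψ n (l + 1)|
      ≤ |γ - σ2 ^ 2| * |φ n 0 * ψ n 0| + σ2 ^ 2 * |∑' l, φ n (l + 1) * ψ n (l + 1)| := by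
        rw [mul_assoc, ← abs_mul, ← abs_of_nonneg (sq_nonneg σ2), ← abs_mul, abs_sq]
        exact abs_add_le _ _
    _ ≤ _ := by gcongr

-- The bounded expression is (Ass5) for `β_n`; for `ψ = φ` it is (Ass4) for `α_n²`.
lemma exists_abs_approx_sub_le (hp : 1 / 2 < p) (hp1 : p < 1) (σ2 γ : ℝ) {s : ℝ}
    (hs : 2 - (p + p) ≤ s)
    (hφ : ∀ n l, |φ n l| ≤ E * powDecay p l) (hψ : ∀ n l, |ψ n l| ≤ E' * powDecay p l) :
    ∃ C, ∀ n N : ℕ,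
      |φ n 0 * ψ n 0 * ((N : ℝ) * (γ - σ2 ^ 2)) +
          σ2 ^ 2 * (∑ j ∈ Icc 1 N, ∑ l ∈ Icc 1 (j - 1), φ n (j - l) * ψ n (j - l)) -
          (N : ℝ) * ((γ - σ2 ^ 2) * φ n 0 * ψ n 0 +
            σ2 ^ 2 * ∑' l, φ n (l + 1) * ψ n (l + 1))|
        ≤ C * (N : ℝ) ^ s := by
  refine ⟨σ2 ^ 2 * (E * E' * ((p + p) / (p + p - 1) / (2 - (p + p)))), fun n N => ?_⟩
  have hE : 0 ≤ E * E' := by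
    simpa [powDecay_zero] using (abs_nonneg _).trans (abs_mul_le_mul_powDecay (hφ n 0) (hψ n 0))
  have hq : 0 ≤ (p + p) / (p + p - 1) / (2 - (p + p)) :=
    div_nonneg (div_nonneg (by linarith) (by linarith)) (by linarith)
  have hcesaro := abs_sum_Icc_sum_Icc_sub_le (u := fun l => φ n l * ψ n l) (by linarith)
    (by linarith) (fun l => abs_mul_le_mul_powDecay (hφ n l) (hψ n l)) N
  calc _ = σ2 ^ 2 * |∑ j ∈ Icc 1 N, ∑ l ∈ Icc 1 (j - 1), φ n (j - l) * ψ n (j - l) -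
            N * ∑' l, φ n (l + 1) * ψ n (l + 1)| := by
        rw [← abs_of_nonneg (sq_nonneg σ2), ← abs_mul, abs_sq]
        ring_nf
    _ ≤ σ2 ^ 2 * (E * E' * ((p + p) / (p + p - 1) / (2 - (p + p))) * (N : ℝ) ^ s) := by
        gcongr
        exact hcesaro.trans (mul_le_mul_of_nonneg_left
          (natCast_rpow_le_natCast_rpow (by linarith) hs N) (mul_nonneg hE hq))
    _ = _ := by ring

end Covariance

theorem stmt17_general (σ2 γ : ℝ)
    (d : ℕ → ℕ) (c : ℕ → ℕ → ℕ → ℝ) (θ : ℝ) (hθ0 : 0 < θ) (hθ : θ < 1 / 2)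
    (hA : AssumptionA d c θ) (v w v' w' : ℕ → ℕ → ℝ) (Kv Kw Kv' Kw' : ℝ)
    (hv : ∀ n, ∑ ν ∈ Finset.range (d n), |v n ν| ≤ Kv)
    (hw : ∀ n, ∑ ν ∈ Finset.range (d n), |w n ν| ≤ Kw)
    (hv' : ∀ n, ∑ ν ∈ Finset.range (d n), |v' n ν| ≤ Kv')
    (hw' : ∀ n, ∑ ν ∈ Finset.range (d n), |w' n ν| ≤ Kw') :
    -- the defining series converge
    (∀ n, Summable (fun l : ℕ => (ftil d c n (v n) (w n) (l + 1) 0) ^ 2)) ∧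
    (∀ n, Summable (fun l : ℕ =>
      ftil d c n (v n) (w n) (l + 1) 0 * ftil d c n (v' n) (w' n) (l + 1) 0)) ∧
    -- uniform boundedness in `n` of `α_n²` and `β_n`
    (∃ K : ℝ, ∀ n,
      |(γ - σ2 ^ 2) * (ftil d c n (v n) (w n) 0 0) ^ 2 +
          σ2 ^ 2 * ∑' l : ℕ, (ftil d c n (v n) (w n) (l + 1) 0) ^ 2| ≤ K ∧
      |(γ - σ2 ^ 2) * (ftil d c n (v n) (w n) 0 0) * (ftil d c n (v' n) (w' n) 0 0) +
          σ2 ^ 2 * ∑' l : ℕ,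
            ftil d c n (v n) (w n) (l + 1) 0 * ftil d c n (v' n) (w' n) (l + 1) 0| ≤ K) ∧
    -- the approximation bounds (Ass4) and (Ass5) hold with these choices
    (∃ C : ℝ, ∀ n n' : ℕ,
      |(ftil d c n (v n) (w n) 0 0) ^ 2 * ((n' : ℝ) * (γ - σ2 ^ 2)) +
          σ2 ^ 2 * (∑ j ∈ Finset.Icc 1 n', ∑ l ∈ Finset.Icc 1 (j - 1),
            (ftil d c n (v n) (w n) (j - l) 0) ^ 2) -
          (n' : ℝ) * ((γ - σ2 ^ 2) * (ftil d c n (v n) (w n) 0 0) ^ 2 +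
            σ2 ^ 2 * ∑' l : ℕ, (ftil d c n (v n) (w n) (l + 1) 0) ^ 2)|
        ≤ C * (n' : ℝ) ^ ((1 : ℝ) - θ) ∧
      |(ftil d c n (v n) (w n) 0 0) * (ftil d c n (v' n) (w' n) 0 0) *
            ((n' : ℝ) * (γ - σ2 ^ 2)) +
          σ2 ^ 2 * (∑ j ∈ Finset.Icc 1 n', ∑ l ∈ Finset.Icc 1 (j - 1),
            ftil d c n (v n) (w n) (j - l) 0 * ftil d c n (v' n) (w' n) (j - l) 0) -
          (n' : ℝ) * ((γ - σ2 ^ 2) * (ftil d c n (v n) (w n) 0 0) *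
              (ftil d c n (v' n) (w' n) 0 0) +
            σ2 ^ 2 * ∑' l : ℕ,
              ftil d c n (v n) (w n) (l + 1) 0 * ftil d c n (v' n) (w' n) (l + 1) 0)|
        ≤ C * (n' : ℝ) ^ ((1 : ℝ) - θ)) := by
  have hp : 1 / 2 < 1 / 2 + θ := by linarith
  have hp1 : 1 / 2 + θ < 1 := by linarith
  have hs : 2 - (1 / 2 + θ + (1 / 2 + θ)) ≤ 1 - θ := by linarith
  obtain ⟨E, hE⟩ := exists_abs_ftil_le_mul_powDecay hθ0 hθ hA hv hw
  obtain ⟨E', hE'⟩ := exists_abs_ftil_le_mul_powDecay hθ0 hθ hA hv' hw'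
  have hsum₁ := summable_mul_succ_of_abs_le_mul_powDecay hp hE hE
  have hsum₂ := summable_mul_succ_of_abs_le_mul_powDecay hp hE hE'
  obtain ⟨K₁, hK₁⟩ := exists_abs_longRunCov_le hp σ2 γ hE hE
  obtain ⟨K₂, hK₂⟩ := exists_abs_longRunCov_le hp σ2 γ hE hE'
  obtain ⟨C₁, hC₁⟩ := exists_abs_approx_sub_le hp hp1 σ2 γ hs hE hE
  obtain ⟨C₂, hC₂⟩ := exists_abs_approx_sub_le hp hp1 σ2 γ hs hE hE'
  refine ⟨fun n => by simpa only [sq] using hsum₁ n, hsum₂,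
    ⟨max K₁ K₂, fun n => ⟨?_, ?_⟩⟩, ⟨max C₁ C₂, fun n N => ⟨?_, ?_⟩⟩⟩
  · simpa only [sq, mul_assoc] using (hK₁ n).trans (le_max_left _ _)
  · exact (hK₂ n).trans (le_max_right _ _)
  · simpa only [sq, mul_assoc] using (hC₁ n N).trans
      (mul_le_mul_of_nonneg_right (le_max_left _ _) (rpow_nonneg (Nat.cast_nonneg N) _))
  · exact (hC₂ n N).trans
      (mul_le_mul_of_nonneg_right (le_max_right _ _) (rpow_nonneg (Nat.cast_nonneg N) _))

/-- explicit asymptotic variance and covariance parameters under stationary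
innovation moments `σ_k² = σ²`, `γ_k = γ`: the defining series converge, are bounded
uniformly in `n`, and satisfy the approximation bounds (Ass4) and (Ass5). -/
theorem stmt17 {Ω : Type*} [MeasureSpace Ω] [IsProbabilityMeasure (ℙ : Measure Ω)]
    (ε : ℤ → Ω → ℝ) (hmeas : ∀ k, Measurable (ε k))
    (hindep : ProbabilityTheory.iIndepFun ε ℙ)
    (hmean : ∀ k, ∫ ω, ε k ω = 0)
    (δ : ℝ) (hδ : 0 < δ) (M : ℝ)
    (hmom : ∀ k, ∫ ω, |ε k ω| ^ ((4 : ℝ) + δ) ≤ M)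
    (hLp : ∀ k, MemLp (ε k) (ENNReal.ofReal (4 + δ)))
    -- stationarity of the moments up to order four:
    (σ2 γ : ℝ) (hvar : ∀ k, ∫ ω, (ε k ω) ^ 2 = σ2) (hkurt : ∀ k, ∫ ω, (ε k ω) ^ 4 = γ)
    (d : ℕ → ℕ) (c : ℕ → ℕ → ℕ → ℝ) (θ : ℝ) (hθ0 : 0 < θ) (hθ : θ < 1 / 2)
    (hA : AssumptionA d c θ) (v w v' w' : ℕ → ℕ → ℝ) (Kv Kw Kv' Kw' : ℝ)
    (hv : ∀ n, ∑ ν ∈ Finset.range (d n), |v n ν| ≤ Kv)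
    (hw : ∀ n, ∑ ν ∈ Finset.range (d n), |w n ν| ≤ Kw)
    (hv' : ∀ n, ∑ ν ∈ Finset.range (d n), |v' n ν| ≤ Kv')
    (hw' : ∀ n, ∑ ν ∈ Finset.range (d n), |w' n ν| ≤ Kw') :
    -- the defining series converge
    (∀ n, Summable (fun l : ℕ => (ftil d c n (v n) (w n) (l + 1) 0) ^ 2)) ∧
    (∀ n, Summable (fun l : ℕ =>
      ftil d c n (v n) (w n) (l + 1) 0 * ftil d c n (v' n) (w' n) (l + 1) 0)) ∧
    -- uniform boundedness in `n` of `α_n²` and `β_n`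
    (∃ K : ℝ, ∀ n,
      |(γ - σ2 ^ 2) * (ftil d c n (v n) (w n) 0 0) ^ 2 +
          σ2 ^ 2 * ∑' l : ℕ, (ftil d c n (v n) (w n) (l + 1) 0) ^ 2| ≤ K ∧
      |(γ - σ2 ^ 2) * (ftil d c n (v n) (w n) 0 0) * (ftil d c n (v' n) (w' n) 0 0) +
          σ2 ^ 2 * ∑' l : ℕ,
            ftil d c n (v n) (w n) (l + 1) 0 * ftil d c n (v' n) (w' n) (l + 1) 0| ≤ K) ∧
    -- the approximation bounds (Ass4) and (Ass5) hold with these choices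
    (∃ C : ℝ, ∀ n n' : ℕ,
      |(ftil d c n (v n) (w n) 0 0) ^ 2 * ((n' : ℝ) * (γ - σ2 ^ 2)) +
          σ2 ^ 2 * (∑ j ∈ Finset.Icc 1 n', ∑ l ∈ Finset.Icc 1 (j - 1),
            (ftil d c n (v n) (w n) (j - l) 0) ^ 2) -
          (n' : ℝ) * ((γ - σ2 ^ 2) * (ftil d c n (v n) (w n) 0 0) ^ 2 +
            σ2 ^ 2 * ∑' l : ℕ, (ftil d c n (v n) (w n) (l + 1) 0) ^ 2)|
        ≤ C * (n' : ℝ) ^ ((1 : ℝ) - θ) ∧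
      |(ftil d c n (v n) (w n) 0 0) * (ftil d c n (v' n) (w' n) 0 0) *
            ((n' : ℝ) * (γ - σ2 ^ 2)) +
          σ2 ^ 2 * (∑ j ∈ Finset.Icc 1 n', ∑ l ∈ Finset.Icc 1 (j - 1),
            ftil d c n (v n) (w n) (j - l) 0 * ftil d c n (v' n) (w' n) (j - l) 0) -
          (n' : ℝ) * ((γ - σ2 ^ 2) * (ftil d c n (v n) (w n) 0 0) *
              (ftil d c n (v' n) (w' n) 0 0) +
            σ2 ^ 2 * ∑' l : ℕ,
              ftil d c n (v n) (w n) (l + 1) 0 * ftil d c n (v' n) (w' n) (l + 1) 0)|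
        ≤ C * (n' : ℝ) ^ ((1 : ℝ) - θ)) :=
  stmt17_general σ2 γ d c θ hθ0 hθ hA v w v' w' Kv Kw Kv' Kw' hv hw hv' hw'

end
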